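/- arXiv:1709.07996 — 2 statements merged into one kernel-verified Lean document; each statement's English description precedes it below -/
import Mathlib

section
/- Let z ∈ Ĩ_n and i ∈ ℤ with z(i) ≠ i, z(i+1) ≠ i+1, and z(i) < z(i+1). Then ℓ(s_i z s_i) = ℓ(z) + 2, where ℓ is the Coxeter length on S̃_n. -/
open Finset

/-- `w` is an element of the affine symmetric group `S̃_n`: a bijection `ℤ → ℤ` with
`w (i + n) = w i + n` for all `i` and `∑_{i=1}^n w i = n (n+1)/2`. -/
def IsAffine (n : ℕ) (w : Equiv.Perm ℤ) : Prop :=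
  (∀ i : ℤ, w (i + n) = w i + n) ∧ ∑ i ∈ Finset.Icc (1 : ℤ) (n : ℤ), (w i - i) = 0

/-- The Coxeter length of `w ∈ S̃_n`: the number of inversions `(i, j)`, `i < j`,
`w i > w j`, counted up to the equivalence `(i,j) ∼ (i+n, j+n)` (representatives with
`i ∈ [n]`). -/
noncomputable def affLen (n : ℕ) (w : Equiv.Perm ℤ) : ℕ :=
  Nat.card {p : ℤ × ℤ // 1 ≤ p.1 ∧ p.1 ≤ (n : ℤ) ∧ p.1 < p.2 ∧ w p.2 < w p.1}

/-- The absolute length of an involution `z ∈ Ĩ_n`: the number of 2-cycles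
`(i, j)` with `i < j = z i`, counted up to the equivalence `(i,j) ∼ (i+n, j+n)`. -/
noncomputable def absLen (n : ℕ) (z : Equiv.Perm ℤ) : ℕ :=
  Nat.card {p : ℤ × ℤ // 1 ≤ p.1 ∧ p.1 ≤ (n : ℤ) ∧ p.1 < p.2 ∧ z p.1 = p.2}

/-- The underlying function of the reflection `t_{i j}`: it sends `i + m n ↦ j + m n` and
`j + m n ↦ i + m n` for all `m`, fixing everything else. -/
def tFun (n : ℕ) (i j x : ℤ) : ℤ :=
  if (n : ℤ) ∣ x - i then x + (j - i) else if (n : ℤ) ∣ x - j then x - (j - i) else x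

theorem tFun_comp (n : ℕ) (i j x : ℤ) : tFun n j i (tFun n i j x) = x := by
  unfold tFun
  by_cases h1 : (n : ℤ) ∣ x - i
  · rw [if_pos h1]
    have c1 : (n : ℤ) ∣ x + (j - i) - j := by
      have e : x + (j - i) - j = x - i := by ring
      rw [e]; exact h1
    rw [if_pos c1]; ring
  · rw [if_neg h1]
    by_cases h2 : (n : ℤ) ∣ x - j
    · rw [if_pos h2]
      have c1 : ¬ (n : ℤ) ∣ x - (j - i) - j := by
        intro hc
        apply h1
        have e : x - i = 2 * (x - j) - (x - (j - i) - j) := by ring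
        rw [e]
        exact dvd_sub (Dvd.dvd.mul_left h2 2) hc
      have c2 : (n : ℤ) ∣ x - (j - i) - i := by
        have e : x - (j - i) - i = x - j := by ring
        rw [e]; exact h2
      rw [if_neg c1, if_pos c2]; ring
    · simp only [if_neg h1, if_neg h2]

/-- The reflection `t_{i j} ∈ S̃_n`. -/
def tPerm (n : ℕ) (i j : ℤ) : Equiv.Perm ℤ :=
  ⟨tFun n i j, tFun n j i, fun x => tFun_comp n i j x, fun x => tFun_comp n j i x⟩

/-- The simple generator `s_i = t_{i, i+1} ∈ S̃_n`. -/
def sPerm (n : ℕ) (i : ℤ) : Equiv.Perm ℤ := tPerm n i (i + 1)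

/-!
The inversion set `Inv(w) = {(a, b) | a < b, w b < w a}` is invariant under the diagonal shift
by `(n, n)`, and `ℓ(w)` counts its points in the window `1 ≤ a ≤ n`; any bijection of `ℤ × ℤ`
commuting with the shift preserves such counts. Since `(a, b) ↦ (w⁻¹ b, w⁻¹ a)` maps `Inv(w⁻¹)`
onto `Inv(w)`, `ℓ(w⁻¹) = ℓ(w)`. If `w i < w (i + 1)`, then `Inv(w s_i)` is the preimage of
`Inv(w)` under `s_i × s_i` plus the shift orbit of `(i, i + 1)`, so `ℓ(w s_i) = ℓ(w) + 1`.
Finally `s_i z s_i = (z s_i)⁻¹ s_i`, and `(z s_i)⁻¹ = s_i z` keeps `i, i + 1` in order because an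
involution commuting with the shift and moving `i` cannot send `i` into `i + nℤ`.
-/

lemma map_add_mul_of_map_add {c : ℤ} {g : ℤ → ℤ} (hg : ∀ x, g (x + c) = g x + c)
    (x k : ℤ) : g (x + k * c) = g x + k * c :=
  AddConstMapClass.map_add_zsmul (⟨g, hg⟩ : AddConstMap ℤ ℤ c c) x k

namespace Equiv.Perm

lemma inv_apply_add_of_apply_add {c : ℤ} {w : Perm ℤ} (hw : ∀ x, w (x + c) = w x + c)
    (x : ℤ) : w⁻¹ (x + c) = w⁻¹ x + c := by
  rw [inv_eq_iff_eq, hw, ← mul_apply, mul_inv_cancel, one_apply]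

lemma mul_apply_add_of_apply_add {c : ℤ} {u v : Perm ℤ} (hu : ∀ x, u (x + c) = u x + c)
    (hv : ∀ x, v (x + c) = v x + c) (x : ℤ) : (u * v) (x + c) = (u * v) x + c := by
  rw [mul_apply, mul_apply, hv, hu]

end Equiv.Perm

lemma exists_abs_sub_le_of_map_add {n : ℕ} (hn : 0 < n) {w : ℤ → ℤ}
    (hw : ∀ x, w (x + n) = w x + n) : ∃ C, ∀ x, |w x - x| ≤ C := by
  have hper : Function.Periodic (fun x => |w x - x|) (n : ℤ) := fun x => by
    simp only [hw, add_sub_add_right_eq_sub]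
  obtain ⟨C, hC⟩ := ((Finset.Ico (0 : ℤ) n).image fun x => |w x - x|).exists_le
  refine ⟨C, fun x => ?_⟩
  obtain ⟨y, hy, hxy⟩ := hper.exists_mem_Ico₀ (by exact_mod_cast hn) x
  exact hxy ▸ hC _ (Finset.mem_image_of_mem _ (Finset.mem_Ico.mpr hy))

section Window

variable {n : ℕ}

abbrev shiftVec (n : ℕ) : ℤ × ℤ := (n, n)

def window (n : ℕ) : Set (ℤ × ℤ) := {p | 1 ≤ p.1 ∧ p.1 ≤ n}

def IsShiftInvariant (n : ℕ) (S : Set (ℤ × ℤ)) : Prop :=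
  ∀ p (k : ℤ), p + k • shiftVec n ∈ S ↔ p ∈ S

def shiftOrbit (n : ℕ) (p : ℤ × ℤ) : Set (ℤ × ℤ) :=
  Set.range fun k : ℤ => p + k • shiftVec n

noncomputable def toWindow (hn : 0 < (n : ℤ)) (p : ℤ × ℤ) : ℤ × ℤ :=
  p - toIcoDiv hn 1 p.1 • shiftVec n

lemma toWindow_mem_window (hn : 0 < (n : ℤ)) (p : ℤ × ℤ) : toWindow hn p ∈ window n := by
  have h := toIcoMod_mem_Ico hn 1 p.1
  rw [← self_sub_toIcoDiv_zsmul] at h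
  obtain ⟨h1, h2⟩ := h
  exact ⟨h1, by simp only [toWindow, Prod.fst_sub, Prod.smul_fst]; omega⟩

lemma toWindow_add_zsmul (hn : 0 < (n : ℤ)) (p : ℤ × ℤ) (k : ℤ) :
    toWindow hn (p + k • shiftVec n) = toWindow hn p := by
  simp only [toWindow, Prod.fst_add, Prod.smul_fst, toIcoDiv_add_zsmul, add_smul]
  abel

lemma toWindow_of_mem_window (hn : 0 < (n : ℤ)) {p : ℤ × ℤ} (hp : p ∈ window n) :
    toWindow hn p = p := by
  have h : toIcoDiv hn 1 p.1 = 0 :=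
    toIcoDiv_eq_of_sub_zsmul_mem_Ico hn (by obtain ⟨h1, h2⟩ := hp; simp; omega)
  simp [toWindow, h]

lemma exists_toWindow_eq_add_zsmul (hn : 0 < (n : ℤ)) (p : ℤ × ℤ) :
    ∃ k : ℤ, toWindow hn p = p + k • shiftVec n :=
  ⟨-toIcoDiv hn 1 p.1, by rw [toWindow, neg_smul, sub_eq_add_neg]⟩

lemma IsShiftInvariant.preimage {S : Set (ℤ × ℤ)} (hS : IsShiftInvariant n S)
    {f : ℤ × ℤ → ℤ × ℤ}
    (hf : ∀ p (k : ℤ), f (p + k • shiftVec n) = f p + k • shiftVec n) :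
    IsShiftInvariant n (f ⁻¹' S) := fun p k => by
  simp only [Set.mem_preimage, hf]
  exact hS _ k

theorem ncard_window_inter_preimage (hn : 0 < (n : ℤ)) (f : ℤ × ℤ ≃ ℤ × ℤ)
    (hf : ∀ p (k : ℤ), f (p + k • shiftVec n) = f p + k • shiftVec n)
    {S : Set (ℤ × ℤ)} (hS : IsShiftInvariant n S) :
    (window n ∩ f ⁻¹' S).ncard = (window n ∩ S).ncard := by
  refine Set.ncard_congr (fun p _ => toWindow hn (f p)) (fun p hp => ?_)
    (fun p q hp hq hpq => ?_) (fun q hq => ?_)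
  · obtain ⟨k, hk⟩ := exists_toWindow_eq_add_zsmul hn (f p)
    exact ⟨toWindow_mem_window hn _, hk ▸ (hS _ k).2 hp.2⟩
  · obtain ⟨k, hk⟩ := exists_toWindow_eq_add_zsmul hn (f p)
    obtain ⟨l, hl⟩ := exists_toWindow_eq_add_zsmul hn (f q)
    have hfp : f p = f (q + (l - k) • shiftVec n) := by
      rw [hf, sub_smul, ← add_sub_assoc]
      exact eq_sub_of_add_eq (hk.symm.trans (hpq.trans hl))
    rw [← toWindow_of_mem_window hn hp.1, ← toWindow_of_mem_window hn hq.1,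
      f.injective hfp, toWindow_add_zsmul]
  · obtain ⟨k, hk⟩ := exists_toWindow_eq_add_zsmul hn (f.symm q)
    have hfk : f (toWindow hn (f.symm q)) = q + k • shiftVec n := by
      rw [hk, hf, Equiv.apply_symm_apply]
    refine ⟨toWindow hn (f.symm q), ⟨toWindow_mem_window hn _, ?_⟩, ?_⟩
    · rw [Set.mem_preimage, hfk, hS]
      exact hq.2
    · rw [hfk, toWindow_add_zsmul, toWindow_of_mem_window hn hq.1]

theorem ncard_window_inter_union_shiftOrbit (hn : 0 < (n : ℤ)) {S : Set (ℤ × ℤ)}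
    (hS : IsShiftInvariant n S) (hfin : (window n ∩ S).Finite) {p : ℤ × ℤ} (hp : p ∉ S) :
    (window n ∩ (S ∪ shiftOrbit n p)).ncard = (window n ∩ S).ncard + 1 := by
  obtain ⟨k, hk⟩ := exists_toWindow_eq_add_zsmul hn p
  have horbit : window n ∩ shiftOrbit n p = {toWindow hn p} := by
    ext q
    constructor
    · rintro ⟨hq, l, rfl⟩
      rw [Set.mem_singleton_iff, ← toWindow_of_mem_window hn hq, toWindow_add_zsmul]
    · rintro rfl
      exact ⟨toWindow_mem_window hn p, k, hk.symm⟩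
  rw [Set.inter_union_distrib_left, horbit, Set.union_singleton,
    Set.ncard_insert_of_notMem _ hfin]
  rintro ⟨-, hpS⟩
  exact hp ((hS p k).1 (hk ▸ hpS))

end Window

section SimpleReflection

variable {n : ℕ} {i : ℤ}

lemma sPerm_apply (x : ℤ) : sPerm n i x =
    if (n : ℤ) ∣ x - i then x + 1 else if (n : ℤ) ∣ x - (i + 1) then x - 1 else x := by
  show tFun n i (i + 1) x = _
  simp [tFun]

lemma sPerm_add (x : ℤ) : sPerm n i (x + n) = sPerm n i x + n := by
  simp only [sPerm_apply, add_sub_right_comm x (n : ℤ), dvd_add_self_right]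
  split_ifs <;> ring

lemma sPerm_of_dvd {x : ℤ} (hx : (n : ℤ) ∣ x - i) : sPerm n i x = x + 1 := by
  rw [sPerm_apply, if_pos hx]

lemma not_natCast_dvd_one (hn : n ≠ 1) : ¬ (n : ℤ) ∣ 1 := by
  exact_mod_cast mt Nat.dvd_one.mp hn

lemma sPerm_add_one_of_dvd (hn : n ≠ 1) {x : ℤ} (hx : (n : ℤ) ∣ x - i) :
    sPerm n i (x + 1) = x := by
  have hx' : ¬ (n : ℤ) ∣ x + 1 - i := fun h =>
    not_natCast_dvd_one hn (by simpa using dvd_sub h hx)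
  rw [sPerm_apply, if_neg hx', if_pos (by simpa using hx), add_sub_cancel_right]

lemma sPerm_sPerm (hn : n ≠ 1) (x : ℤ) : sPerm n i (sPerm n i x) = x := by
  by_cases hx : (n : ℤ) ∣ x - i
  · rw [sPerm_of_dvd hx, sPerm_add_one_of_dvd hn hx]
  by_cases hx' : (n : ℤ) ∣ x - (i + 1)
  · have hx'' : (n : ℤ) ∣ x - 1 - i := by
      simpa [sub_sub, add_comm] using hx'
    rw [sPerm_apply x, if_neg hx, if_pos hx', sPerm_of_dvd hx'', sub_add_cancel]
  · rw [sPerm_apply x, if_neg hx, if_neg hx', sPerm_apply, if_neg hx, if_neg hx']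

lemma sPerm_lt_sPerm {a b : ℤ} (hab : a < b) (h : ¬((n : ℤ) ∣ a - i ∧ b = a + 1)) :
    sPerm n i a < sPerm n i b := by
  have hnear : ∀ x, x - 1 ≤ sPerm n i x ∧ sPerm n i x ≤ x + 1 := fun x => by
    rw [sPerm_apply]
    split_ifs <;> omega
  have hup : ∀ x, sPerm n i x = x + 1 → (n : ℤ) ∣ x - i := fun x hx => by
    by_contra hd
    rw [sPerm_apply, if_neg hd] at hx
    split_ifs at hx <;> omega
  by_contra! hle
  have hne : sPerm n i a ≠ sPerm n i b := fun he => hab.ne ((sPerm n i).injective he)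
  have ha := hnear a
  have hb := hnear b
  exact h ⟨hup a (by omega), by omega⟩

end SimpleReflection

def inversions (w : ℤ → ℤ) : Set (ℤ × ℤ) := {p | p.1 < p.2 ∧ w p.2 < w p.1}

section Inversions

variable {n : ℕ} {w : Equiv.Perm ℤ}

lemma affLen_eq_ncard (n : ℕ) (w : Equiv.Perm ℤ) :
    affLen n w = (window n ∩ inversions w).ncard :=
  Nat.card_congr (Equiv.subtypeEquivRight fun p => by simp [window, inversions, and_assoc])

lemma isShiftInvariant_inversions {w : ℤ → ℤ} (hw : ∀ x, w (x + n) = w x + n) :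
    IsShiftInvariant n (inversions w) := fun p k => by
  simp [inversions, map_add_mul_of_map_add hw]

lemma finite_window_inter_inversions (hn : 0 < n) {w : ℤ → ℤ}
    (hw : ∀ x, w (x + n) = w x + n) : (window n ∩ inversions w).Finite := by
  obtain ⟨C, hC⟩ := exists_abs_sub_le_of_map_add hn hw
  refine ((Set.finite_Icc (1 : ℤ) n).prod (Set.finite_Icc (1 : ℤ) (n + 2 * C))).subset ?_
  rintro ⟨a, b⟩ ⟨⟨ha1, ha2⟩, hab, hba⟩
  dsimp only at hab hba
  have ha := abs_le.mp (hC a)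
  have hb := abs_le.mp (hC b)
  simp only [Set.mem_prod, Set.mem_Icc]
  omega

lemma inversions_mul_sPerm (hn : n ≠ 1) (hw : ∀ x, w (x + n) = w x + n) {i : ℤ}
    (h : w i < w (i + 1)) :
    inversions ⇑(w * sPerm n i) =
      Equiv.prodCongr (sPerm n i) (sPerm n i) ⁻¹' inversions w ∪ shiftOrbit n (i, i + 1) := by
  have hshift : ∀ a b : ℤ, (n : ℤ) ∣ a - i → b = a + 1 → w a < w b := by
    rintro a b ⟨c, hc⟩ rfl
    rw [show a = i + c * n by linarith, map_add_mul_of_map_add hw, add_right_comm,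
      map_add_mul_of_map_add hw]
    linarith
  have horbit : ∀ a b : ℤ,
      (a, b) ∈ shiftOrbit n (i, i + 1) ↔ (n : ℤ) ∣ a - i ∧ b = a + 1 := by
    intro a b
    simp only [shiftOrbit, Set.mem_range, Prod.smul_mk, smul_eq_mul, Prod.ext_iff, Prod.fst_add,
      Prod.snd_add]
    constructor
    · rintro ⟨k, rfl, rfl⟩
      exact ⟨⟨k, by ring⟩, by ring⟩
    · rintro ⟨⟨k, hk⟩, rfl⟩
      exact ⟨k, by linarith, by linarith⟩
  ext ⟨a, b⟩
  simp only [inversions, Set.mem_union, Set.mem_preimage, Equiv.prodCongr_apply, Prod.map,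
    Set.mem_ofPred_eq, Equiv.Perm.mul_apply, horbit]
  constructor
  · rintro ⟨hab, hba⟩
    by_cases hsp : (n : ℤ) ∣ a - i ∧ b = a + 1
    · exact Or.inr hsp
    · exact Or.inl ⟨sPerm_lt_sPerm hab hsp, hba⟩
  · rintro (⟨hs, hba⟩ | ⟨hd, rfl⟩)
    · refine ⟨?_, hba⟩
      have := sPerm_lt_sPerm hs fun ⟨hd, he⟩ => (hshift _ _ hd he).not_gt hba
      rwa [sPerm_sPerm hn, sPerm_sPerm hn] at this
    · rw [sPerm_of_dvd hd, sPerm_add_one_of_dvd hn hd]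
      exact ⟨lt_add_one a, hshift a _ hd rfl⟩

lemma inversions_inv (w : Equiv.Perm ℤ) :
    inversions ⇑w⁻¹ =
      (Equiv.prodComm ℤ ℤ).trans (Equiv.prodCongr w⁻¹ w⁻¹) ⁻¹' inversions w := by
  ext ⟨a, b⟩
  simp [inversions, and_comm]

theorem affLen_mul_sPerm (hn : 2 ≤ n) (hw : ∀ x, w (x + n) = w x + n) {i : ℤ}
    (h : w i < w (i + 1)) : affLen n (w * sPerm n i) = affLen n w + 1 := by
  have hs : ∀ p (k : ℤ), Equiv.prodCongr (sPerm n i) (sPerm n i) (p + k • shiftVec n) =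
      Equiv.prodCongr (sPerm n i) (sPerm n i) p + k • shiftVec n := fun p k => by
    ext <;> simp [map_add_mul_of_map_add sPerm_add]
  have hws := Equiv.Perm.mul_apply_add_of_apply_add hw (sPerm_add (i := i))
  have hset := inversions_mul_sPerm (by omega) hw h
  have hfin := (finite_window_inter_inversions (by omega) hws).subset
    (Set.inter_subset_inter_right _ (hset ▸ Set.subset_union_left))
  have hnot : (i, i + 1) ∉ Equiv.prodCongr (sPerm n i) (sPerm n i) ⁻¹' inversions w := by
    simp [inversions, sPerm_of_dvd, sPerm_add_one_of_dvd (show n ≠ 1 by omega)]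
  have hS := (isShiftInvariant_inversions hw).preimage hs
  rw [affLen_eq_ncard, affLen_eq_ncard, hset,
    ncard_window_inter_union_shiftOrbit (by omega) hS hfin hnot,
    ncard_window_inter_preimage (by omega) _ hs (isShiftInvariant_inversions hw)]

theorem affLen_inv (hn : 0 < n) (hw : ∀ x, w (x + n) = w x + n) :
    affLen n w⁻¹ = affLen n w := by
  have hw' := map_add_mul_of_map_add (Equiv.Perm.inv_apply_add_of_apply_add hw)
  rw [affLen_eq_ncard, affLen_eq_ncard, inversions_inv,
    ncard_window_inter_preimage (by omega) _ (fun p k => by ext <;> simpa using hw' _ k)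
      (isShiftInvariant_inversions hw)]

end Inversions

lemma apply_eq_self_of_dvd_apply_sub {n : ℕ} {z : ℤ → ℤ} (hz : ∀ x, z (x + n) = z x + n)
    (hinv : ∀ x, z (z x) = x) {x : ℤ} (h : (n : ℤ) ∣ z x - x) : z x = x := by
  obtain ⟨c, hc⟩ := h
  have hzz := map_add_mul_of_map_add hz x c
  rw [show x + c * n = z x by linarith, hinv] at hzz
  linarith

theorem length_conj_add_two_general (n : ℕ) (hn : 2 ≤ n) (z : Equiv.Perm ℤ)
    (hz : IsAffine n z) (hinv : ∀ x : ℤ, z (z x) = x) (i : ℤ)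
    (h1 : z i ≠ i) (h3 : z i < z (i + 1)) :
    affLen n (sPerm n i * z * sPerm n i) = affLen n z + 2 := by
  set s := sPerm n i
  have hz_inv : z⁻¹ = z := inv_eq_of_mul_eq_one_right (Equiv.ext hinv)
  have hs_inv : s⁻¹ = s := inv_eq_of_mul_eq_one_right (Equiv.ext (sPerm_sPerm (by omega)))
  have hconj : s * z * s = (z * s)⁻¹ * s := by rw [mul_inv_rev, hs_inv, hz_inv]
  have hzs : ∀ x, (z * s) (x + n) = (z * s) x + n :=
    Equiv.Perm.mul_apply_add_of_apply_add hz.1 sPerm_add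
  have hlt : (z * s)⁻¹ i < (z * s)⁻¹ (i + 1) := by
    rw [mul_inv_rev, hs_inv, hz_inv]
    exact sPerm_lt_sPerm h3 fun ⟨hd, _⟩ => h1 (apply_eq_self_of_dvd_apply_sub hz.1 hinv hd)
  rw [hconj, affLen_mul_sPerm hn (Equiv.Perm.inv_apply_add_of_apply_add hzs) hlt,
    affLen_inv (by omega) hzs, affLen_mul_sPerm hn hz.1 h3]

/-- If `z ∈ Ĩ_n`, `z i ≠ i`, `z (i+1) ≠ i + 1` and `z i < z (i+1)`, then
`ℓ(s_i z s_i) = ℓ(z) + 2`. -/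
theorem length_conj_add_two (n : ℕ) (hn : 2 ≤ n) (z : Equiv.Perm ℤ)
    (hz : IsAffine n z) (hinv : ∀ x : ℤ, z (z x) = x) (i : ℤ)
    (h1 : z i ≠ i) (h2 : z (i + 1) ≠ i + 1) (h3 : z i < z (i + 1)) :
    affLen n (sPerm n i * z * sPerm n i) = affLen n z + 2 :=
  length_conj_add_two_general n hn z hz hinv i h1 h3
end

section
/- If θ is a weighted involution in S̃_n with positive weight, then there exists an index i ∈ [n] with θπ_i ≠ θ, i.e., the right descent set Des_R(θ) is nonempty. -/
open Finset

/-- A weighted involution in `S̃_n`, encoded as a pair `θ = (w, φ_R)` where `w ∈ Ĩ_n` is an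
affine involution and `φ_R : ℤ → ℕ` is the right form of the weight map: it is supported on
the right endpoints of `w` (where `w i < i`) and is `n`-periodic. -/
def IsWInv (n : ℕ) (θ : Equiv.Perm ℤ × (ℤ → ℕ)) : Prop :=
  IsAffine n θ.1 ∧ (∀ x : ℤ, θ.1 (θ.1 x) = x) ∧
    (∀ i : ℤ, ¬ θ.1 i < i → θ.2 i = 0) ∧ (∀ i : ℤ, θ.2 (i + n) = θ.2 i)

/-- The right operator `π_i` on weighted involutions `θ = (w, φ)` (encoded via the right
form `φ_R`).  If `φ_R i > φ_R (i+1)` then `θ π_i = (s_i w s_i, ψ)` where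
`ψ_R j = φ_R i - 1` for `j ≡ i + 1 (mod n)`, `ψ_R j = φ_R (i+1)` for `j ≡ i (mod n)` and
`ψ_R j = φ_R j` otherwise; if `φ_R i ≤ φ_R (i+1)` then `θ π_i = θ`. -/
def piR (n : ℕ) (i : ℤ) (θ : Equiv.Perm ℤ × (ℤ → ℕ)) : Equiv.Perm ℤ × (ℤ → ℕ) :=
  if θ.2 (i + 1) < θ.2 i then
    (sPerm n i * θ.1 * sPerm n i,
      fun j => if j ≡ i + 1 [ZMOD (n : ℤ)] then θ.2 i - 1
        else if j ≡ i [ZMOD (n : ℤ)] then θ.2 (i + 1)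
        else θ.2 j)
  else θ

/-- The weight of a weighted involution: the sum of `φ` over representatives of the
equivalence classes of cycles, i.e. the sum of the right form over a window `[n]`. -/
noncomputable def wtW (n : ℕ) (θ : Equiv.Perm ℤ × (ℤ → ℕ)) : ℕ :=
  ∑ i ∈ Finset.Icc (1 : ℤ) (n : ℤ), θ.2 i

/-!
Without a right descent, `φ_R (i) ≤ φ_R (i+1)` for every `i ∈ [n]`; with `n`-periodicity this
forces `φ_R` to be constant on the window, and positive weight makes that constant positive. Then
every `i ∈ [n]` is the right endpoint of a cycle, `w i < i`, so `∑_{i ∈ [n]} (w i - i) < 0`,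
contradicting `w ∈ S̃_n`.
-/

theorem le_of_piR_eq_self {n : ℕ} {i : ℤ} {θ : Equiv.Perm ℤ × (ℤ → ℕ)} (h : piR n i θ = θ) :
    θ.2 i ≤ θ.2 (i + 1) := by
  by_contra! hlt
  -- `θ π_i` lowers the value at `i`, to `φ_R i - 1` if `n ∣ 1` and to `φ_R (i+1)` otherwise.
  have hi := congrFun (congrArg Prod.snd h) i
  simp only [piR, if_pos hlt, Int.ModEq.refl, if_true] at hi
  split_ifs at hi <;> omega

theorem eq_of_le_add_one_of_periodic {α : Type*} [PartialOrder α] {f : ℤ → α} {n : ℤ}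
    (hle : ∀ i ∈ Finset.Icc 1 n, f i ≤ f (i + 1)) (hper : f (1 + n) = f 1) :
    ∀ i ∈ Finset.Icc 1 n, f i = f 1 := by
  have hmono : MonotoneOn f (Set.Icc 1 (1 + n)) :=
    monotoneOn_of_le_add_one Set.ordConnected_Icc fun a _ ha ha' => by
      simp only [Set.mem_Icc] at ha ha'
      exact hle a (Finset.mem_Icc.2 ⟨ha.1, by omega⟩)
  intro i hi
  rw [Finset.mem_Icc] at hi
  have h1 : f 1 ≤ f i := hmono ⟨le_rfl, by omega⟩ ⟨hi.1, by omega⟩ hi.1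
  have h2 : f i ≤ f (1 + n) := hmono ⟨hi.1, by omega⟩ ⟨by omega, le_rfl⟩ (by omega)
  exact le_antisymm (hper ▸ h2) h1

theorem IsWInv.fst_lt_of_snd_ne_zero {n : ℕ} {θ : Equiv.Perm ℤ × (ℤ → ℕ)} (hθ : IsWInv n θ)
    {i : ℤ} (hi : θ.2 i ≠ 0) : θ.1 i < i := by
  by_contra h
  exact hi (hθ.2.2.1 i h)

theorem exists_right_descent_general (n : ℕ) (θ : Equiv.Perm ℤ × (ℤ → ℕ))
    (hθ : IsWInv n θ) (hwt : 0 < wtW n θ) :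
    ∃ i ∈ Finset.Icc (1 : ℤ) (n : ℤ), piR n i θ ≠ θ := by
  by_contra! hfix
  have hconst : ∀ i ∈ Finset.Icc (1 : ℤ) n, θ.2 i = θ.2 1 :=
    eq_of_le_add_one_of_periodic (fun i hi => le_of_piR_eq_self (hfix i hi)) (hθ.2.2.2 1)
  obtain ⟨k, hk, hk0⟩ := Finset.exists_ne_zero_of_sum_ne_zero hwt.ne'
  have hdesc : ∀ i ∈ Finset.Icc (1 : ℤ) n, θ.1 i - i < 0 := fun i hi => by
    have hi0 : θ.2 i ≠ 0 := by rwa [hconst i hi, ← hconst k hk]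
    linarith [hθ.fst_lt_of_snd_ne_zero hi0]
  have hneg := Finset.sum_neg hdesc ⟨k, hk⟩
  rw [hθ.1.2] at hneg
  exact lt_irrefl 0 hneg

/-- If `θ` is a weighted involution of positive weight, then some `i ∈ [n]` has
`θ π_i ≠ θ`, i.e. the right descent set `Des_R(θ)` is nonempty. -/
theorem exists_right_descent (n : ℕ) (hn : 2 ≤ n) (θ : Equiv.Perm ℤ × (ℤ → ℕ))
    (hθ : IsWInv n θ) (hwt : 0 < wtW n θ) :
    ∃ i ∈ Finset.Icc (1 : ℤ) (n : ℤ), piR n i θ ≠ θ :=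
  exists_right_descent_general n θ hθ hwt
end
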